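/- Let X be an infinite-dimensional complex Banach space and T a bounded linear operator on X. If there exists a nonzero complex polynomial P such that P(T) is a Riesz operator, then the Fredholm spectrum σ_F(T) is a finite set; in particular 0 ∉ acc σ_F(T), i.e., T is pseudo-B-Fredholm. -/

import Mathlib

open Filter Topology Polynomial

variable {E : Type*} [NormedAddCommGroup E] [NormedSpace ℂ E]

/-- A (continuous linear) operator is Fredholm if its kernel is finite-dimensional and
its range has finite codimension. -/
def IsFredholm (T : E →L[ℂ] E) : Prop :=
  FiniteDimensional ℂ (LinearMap.ker (T : E →ₗ[ℂ] E)) ∧ FiniteDimensional ℂ (E ⧸ LinearMap.range (T : E →ₗ[ℂ] E))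

/-- The Fredholm (essential) spectrum. -/
def fredholmSpectrum (T : E →L[ℂ] E) : Set ℂ := {lam : ℂ | ¬ IsFredholm (T - lam • 1)}

/-- `T` is pseudo-B-Fredholm if `0` is not an accumulation point of its Fredholm spectrum. -/
def IsPseudoBFredholm (T : E →L[ℂ] E) : Prop :=
  ¬ AccPt (0 : ℂ) (Filter.principal (fredholmSpectrum T))

/-- A Riesz operator: `T - λ` is Fredholm for every `λ ≠ 0`. -/
def IsRiesz (T : E →L[ℂ] E) : Prop := ∀ lam : ℂ, lam ≠ 0 → IsFredholm (T - lam • 1)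

lemma range_pow_invariant (T : E →L[ℂ] E) (n : ℕ) :
    ∀ x ∈ LinearMap.range ((T ^ n : E →L[ℂ] E) : E →ₗ[ℂ] E),
      T x ∈ LinearMap.range ((T ^ n : E →L[ℂ] E) : E →ₗ[ℂ] E) := by
  rintro x ⟨y, rfl⟩
  refine ⟨T y, ?_⟩
  change (T ^ n) (T y) = T ((T ^ n) y)
  have h1 : (T ^ n) (T y) = (T ^ n * T) y := rfl
  have h2 : T ((T ^ n) y) = (T * T ^ n) y := rfl
  rw [h1, h2, ← pow_succ, ← pow_succ']

/-- Restriction of a continuous linear operator to an invariant submodule. -/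
def restrictCLM (T : E →L[ℂ] E) (M : Submodule ℂ E) (h : ∀ x ∈ M, T x ∈ M) : M →L[ℂ] M where
  toLinearMap := (T : E →ₗ[ℂ] E).restrict h
  cont := Continuous.subtype_mk (T.continuous.comp continuous_subtype_val) _

/-- `T` is B-Fredholm if for some `n` the range of `T ^ n` is closed and the operator induced
by `T` on it is Fredholm. -/
def IsBFredholm (T : E →L[ℂ] E) : Prop :=
  ∃ n : ℕ, IsClosed ((LinearMap.range ((T ^ n : E →L[ℂ] E) : E →ₗ[ℂ] E) : Submodule ℂ E) : Set E) ∧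
    IsFredholm (restrictCLM T (LinearMap.range ((T ^ n : E →L[ℂ] E) : E →ₗ[ℂ] E)) (range_pow_invariant T n))

/-- The essential ascent: the least `n` with `ker T ∩ range (T ^ n)` finite-dimensional. -/
noncomputable def essAscent (T : E →L[ℂ] E) : ℕ∞ :=
  ⨅ n ∈ {m : ℕ | FiniteDimensional ℂ ↥(LinearMap.ker (T : E →ₗ[ℂ] E) ⊓ LinearMap.range ((T ^ m : E →L[ℂ] E) : E →ₗ[ℂ] E))}, (n : ℕ∞)

/-- The essential descent: the least `n` with `range T + ker (T ^ n)` of finite codimension. -/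
noncomputable def essDescent (T : E →L[ℂ] E) : ℕ∞ :=
  ⨅ n ∈ {m : ℕ | FiniteDimensional ℂ (E ⧸ (LinearMap.range (T : E →ₗ[ℂ] E) ⊔ LinearMap.ker ((T ^ m : E →L[ℂ] E) : E →ₗ[ℂ] E)))}, (n : ℕ∞)

/-- `0` is a pole (or regular point) of order at most `m` of the resolvent of `Π(T)` in the
Calkin algebra: there is `S` with `TS - ST`, `STS - S` and `T^(m+1) S - T^m` all compact. -/
def DrazinAt (T : E →L[ℂ] E) (m : ℕ) : Prop :=
  ∃ S : E →L[ℂ] E, IsCompactOperator ⇑(T * S - S * T) ∧ IsCompactOperator ⇑(S * T * S - S) ∧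
    IsCompactOperator ⇑(T ^ (m + 1) * S - T ^ m)

/-- `Π(T)` is Drazin invertible in the Calkin algebra. -/
def CalkinDrazin (T : E →L[ℂ] E) : Prop := ∃ m : ℕ, DrazinAt T m

/-- A power compact operator. -/
def IsPowerCompact (K : E →L[ℂ] E) : Prop := ∃ m : ℕ, 1 ≤ m ∧ IsCompactOperator ⇑(K ^ m)

/-- An inessential operator: `1 - S * J` is Fredholm for every `S`. -/
def IsInessential (J : E →L[ℂ] E) : Prop := ∀ S : E →L[ℂ] E, IsFredholm (1 - S * J)

/-- The norm of `Π(A)` in the Calkin algebra: `inf {‖A + K‖ : K compact}`. -/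
noncomputable def calkinNorm (A : E →L[ℂ] E) : ℝ :=
  sInf {r : ℝ | ∃ K : E →L[ℂ] E, IsCompactOperator ⇑K ∧ r = ‖A + K‖}

/-- The ergodic means `M_n(T) = (1 + T + T² + ⋯ + Tⁿ)/n`. -/
noncomputable def meanOp (T : E →L[ℂ] E) (n : ℕ) : E →L[ℂ] E :=
  ((n : ℂ))⁻¹ • ∑ i ∈ Finset.range (n + 1), T ^ i

/-! If `λ` is not a root of `P`, then `P(T) - P(λ) = (T - λ) Q(T)` with commuting factors, and
`P(T) - P(λ)` is Fredholm because `P(T)` is Riesz and `P(λ) ≠ 0`. A commuting factor of a Fredholm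
operator is Fredholm, so `σ_F(T)` lies in the finite zero set of `P`. -/

theorem IsFredholm.of_commute_mul {A B : E →L[ℂ] E} (hAB : Commute A B) (h : IsFredholm (A * B)) :
    IsFredholm A := by
  obtain ⟨hker, hcoker⟩ := h
  have hker_le :
      LinearMap.ker (A : E →ₗ[ℂ] E) ≤ LinearMap.ker ((A * B : E →L[ℂ] E) : E →ₗ[ℂ] E) := by
    rw [hAB.eq]
    exact LinearMap.ker_le_ker_comp _ _
  have hrange_le :
      LinearMap.range ((A * B : E →L[ℂ] E) : E →ₗ[ℂ] E) ≤ LinearMap.range (A : E →ₗ[ℂ] E) :=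
    LinearMap.range_comp_le_range _ _
  exact ⟨Submodule.finiteDimensional_of_le hker_le,
    Module.Finite.of_surjective _ (Submodule.factor_surjective hrange_le)⟩

theorem eval_mem_fredholmSpectrum_aeval {T : E →L[ℂ] E} {lam : ℂ} (P : ℂ[X])
    (h : lam ∈ fredholmSpectrum T) : P.eval lam ∈ fredholmSpectrum (aeval T P) := by
  obtain ⟨Q, hQ⟩ : X - C lam ∣ P - C (P.eval lam) := X_sub_C_dvd_sub_C_eval
  have hlinear : aeval T (X - C lam) = T - lam • 1 := by
    rw [map_sub, aeval_X, aeval_C, Algebra.algebraMap_eq_smul_one]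
  have hfactor : aeval T P - P.eval lam • 1 = aeval T (X - C lam) * aeval T Q := by
    rw [← map_mul, ← hQ, map_sub, aeval_C, Algebra.algebraMap_eq_smul_one]
  intro hF
  rw [hfactor] at hF
  exact h (hlinear ▸ hF.of_commute_mul ((Commute.all (X - C lam) Q).map (aeval T)))

theorem IsRiesz.fredholmSpectrum_subset {R : E →L[ℂ] E} (hR : IsRiesz R) :
    fredholmSpectrum R ⊆ {0} :=
  fun _ hlam => by_contra fun hne => hlam (hR _ hne)

theorem IsRiesz.fredholmSpectrum_subset_setOf_isRoot {T : E →L[ℂ] E} {P : ℂ[X]}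
    (hR : IsRiesz (aeval T P)) : fredholmSpectrum T ⊆ {z | P.IsRoot z} :=
  fun _ hlam => hR.fredholmSpectrum_subset (eval_mem_fredholmSpectrum_aeval P hlam)

variable {X : Type*} [NormedAddCommGroup X] [NormedSpace ℂ X] [CompleteSpace X]

theorem polynomiallyRiesz_isPseudoBFredholm_general (T : X →L[ℂ] X)
    (hT : ∃ P : Polynomial ℂ, P ≠ 0 ∧ IsRiesz (Polynomial.aeval T P)) :
    (fredholmSpectrum T).Finite ∧ IsPseudoBFredholm T := by
  obtain ⟨P, hP, hR⟩ := hT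
  have hfin : (fredholmSpectrum T).Finite :=
    (finite_setOfPred_isRoot hP).subset hR.fredholmSpectrum_subset_setOf_isRoot
  exact ⟨hfin, fun hacc => Set.Infinite.of_accPt hacc hfin⟩

/-- A polynomially Riesz operator has finite Fredholm spectrum; in particular it is
pseudo-B-Fredholm. -/
theorem polynomiallyRiesz_isPseudoBFredholm (hX : ¬ FiniteDimensional ℂ X) (T : X →L[ℂ] X)
    (hT : ∃ P : Polynomial ℂ, P ≠ 0 ∧ IsRiesz (Polynomial.aeval T P)) :
    (fredholmSpectrum T).Finite ∧ IsPseudoBFredholm T :=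
  polynomiallyRiesz_isPseudoBFredholm_general T hT
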